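/- arXiv:1308.4732 — 5 statements merged into one kernel-verified Lean document; each statement's English description precedes it below -/
import Mathlib

section
/- Complementary-dual principle: Let ζ̄ = (τ̄, σ̄) ∈ 𝓢ₐ be a critical point of Π^d (i.e. it satisfies the stationarity equations ½fᵀGₐ(ζ̄)⁻¹QᵢGₐ(ζ̄)⁻¹f + dᵢ = (1/β)log(τ̄ᵢ/(1 − Σₖτ̄ₖ)) for i = 1,…,p and ½fᵀGₐ(ζ̄)⁻¹BᵢGₐ(ζ̄)⁻¹f + cᵢ = σ̄ᵢ/αᵢ for i = 1,…,r), and set x̄ = Gₐ(ζ̄)⁻¹f. Then x̄ is a critical point of Π, i.e. the gradient of Π vanishes at x̄, and Π(x̄) = Π^d(ζ̄). -/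
/-!
With `εᵢ(x) = ½ xᵀQᵢx + dᵢ` and `ξᵢ(x) = ½ xᵀBᵢx + cᵢ`, the gradient of `Π` at any `x` is
`Gₐ(ζ) x - f` for `ζ = (softmax(β ε(x)), α ξ(x))`. Because `Gₐ(ζ̄)` is symmetric,
`fᵀ Gₐ(ζ̄)⁻¹ M Gₐ(ζ̄)⁻¹ f = x̄ᵀ M x̄`, so the stationarity equations say precisely that this
`ζ` is `ζ̄` at `x̄ = Gₐ(ζ̄)⁻¹ f`; hence the gradient at `x̄` is `Gₐ(ζ̄) x̄ - f = 0`.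

For the values, both nonlinear terms of `Π` meet their conjugates in the Fenchel–Young
equality, at the pairs `(ε(x̄), τ̄)` and `(ξ(x̄), σ̄)`: the log-sum-exp term equals
`½ ∑ τ̄ᵢ x̄ᵀQᵢx̄ - V₁*(τ̄)` and the penalty term equals `½ ∑ σ̄ᵢ x̄ᵀBᵢx̄ - V₂*(σ̄)`. Hence
`Π(x̄) = ½ x̄ᵀGₐ(ζ̄)x̄ - fᵀx̄ - V₁*(τ̄) - V₂*(σ̄)`, and `x̄ᵀGₐ(ζ̄)x̄ = fᵀx̄`.
-/

open Matrix Real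

namespace Real

variable {κ : Type*} [Fintype κ] {β : ℝ} {τ u : κ → ℝ}

theorem exp_mul_eq_div_one_sub_sum (hβ : β ≠ 0) (hτ : ∀ i, 0 < τ i) (hsum : ∑ i, τ i < 1)
    (hu : ∀ i, u i = 1 / β * log (τ i / (1 - ∑ j, τ j))) (i : κ) :
    exp (β * u i) = τ i / (1 - ∑ j, τ j) := by
  rw [hu, ← mul_assoc, mul_one_div_cancel hβ, one_mul, exp_log (div_pos (hτ i) (by linarith))]

theorem one_add_sum_exp_mul_eq_inv (hβ : β ≠ 0) (hτ : ∀ i, 0 < τ i) (hsum : ∑ i, τ i < 1)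
    (hu : ∀ i, u i = 1 / β * log (τ i / (1 - ∑ j, τ j))) :
    1 + ∑ i, exp (β * u i) = (1 - ∑ i, τ i)⁻¹ := by
  have : 1 - ∑ i, τ i ≠ 0 := by linarith
  simp only [exp_mul_eq_div_one_sub_sum hβ hτ hsum hu, ← Finset.sum_div]
  field_simp
  ring

theorem exp_mul_div_one_add_sum_exp_mul (hβ : β ≠ 0) (hτ : ∀ i, 0 < τ i) (hsum : ∑ i, τ i < 1)
    (hu : ∀ i, u i = 1 / β * log (τ i / (1 - ∑ j, τ j))) (i : κ) :
    exp (β * u i) / (1 + ∑ j, exp (β * u j)) = τ i := by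
  have : 1 - ∑ i, τ i ≠ 0 := by linarith
  rw [exp_mul_eq_div_one_sub_sum hβ hτ hsum hu, one_add_sum_exp_mul_eq_inv hβ hτ hsum hu]
  field_simp

/-- Fenchel–Young equality: the negative entropy is the convex conjugate of the log-sum-exp
function `u ↦ β⁻¹ log (1 + ∑ exp (β u))`, whose gradient at `u` is `τ`. -/
theorem inv_mul_log_one_add_sum_exp_mul (hβ : β ≠ 0) (hτ : ∀ i, 0 < τ i) (hsum : ∑ i, τ i < 1)
    (hu : ∀ i, u i = 1 / β * log (τ i / (1 - ∑ j, τ j))) :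
    1 / β * log (1 + ∑ i, exp (β * u i)) = ∑ i, τ i * u i
      - 1 / β * (∑ i, τ i * log (τ i) + (1 - ∑ i, τ i) * log (1 - ∑ i, τ i)) := by
  have hs : 0 < 1 - ∑ i, τ i := by linarith
  have hτu : ∀ i, τ i * u i = 1 / β * (τ i * log (τ i) - τ i * log (1 - ∑ j, τ j)) := fun i => by
    rw [hu, log_div (hτ i).ne' hs.ne']
    ring
  rw [one_add_sum_exp_mul_eq_inv hβ hτ hsum hu, log_inv, Finset.sum_congr rfl fun i _ => hτu i,
    ← Finset.mul_sum, Finset.sum_sub_distrib, ← Finset.sum_mul]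
  ring

end Real

section LogSumExp

variable {κ E : Type*} [Fintype κ] [NormedAddCommGroup E] [NormedSpace ℝ E] {β : ℝ}
  {g : κ → E → ℝ} {g' : κ → E →L[ℝ] ℝ} {x : E}

theorem HasFDerivAt.inv_mul_log_one_add_sum_exp_mul (hβ : β ≠ 0)
    (hg : ∀ i, HasFDerivAt (g i) (g' i) x) :
    HasFDerivAt (fun y => 1 / β * Real.log (1 + ∑ i, Real.exp (β * g i y)))
      (∑ i, (Real.exp (β * g i x) / (1 + ∑ j, Real.exp (β * g j x))) • g' i) x := by
  have hS := (HasFDerivAt.fun_sum fun i (_ : i ∈ Finset.univ) =>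
    ((hg i).const_mul β).exp).const_add 1
  refine ((hS.log (by positivity)).const_mul (1 / β)).congr_fderiv ?_
  simp only [Finset.smul_sum, smul_smul]
  refine Finset.sum_congr rfl fun i _ => ?_
  congr 1
  field_simp

end LogSumExp

section QuadraticForm

variable {ι : Type*} [Fintype ι]

noncomputable def dotProductCLM : (ι → ℝ) →L[ℝ] (ι → ℝ) →L[ℝ] ℝ :=
  (dotProductBilin ℝ ℝ).toContinuousBilinearMap

theorem hasFDerivAt_half_dotProduct_mulVec_self {M : Matrix ι ι ℝ} (hM : M.IsSymm) (x : ι → ℝ) :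
    HasFDerivAt (fun y => 1 / 2 * (y ⬝ᵥ M *ᵥ y)) (dotProductCLM (M *ᵥ x)) x := by
  have hquad := dotProductCLM.hasFDerivAt_of_bilinear (hasFDerivAt_id x)
    (M.mulVecLin.toContinuousLinearMap.hasFDerivAt (x := x))
  refine (hquad.const_mul (1 / 2)).congr_fderiv ?_
  ext v
  have hsymm : x ⬝ᵥ M *ᵥ v = M *ᵥ x ⬝ᵥ v := by
    rw [dotProduct_mulVec, ← mulVec_transpose, hM.eq]
  change 1 / 2 * (x ⬝ᵥ M *ᵥ v + v ⬝ᵥ M *ᵥ x) = M *ᵥ x ⬝ᵥ v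
  rw [hsymm, dotProduct_comm v]
  ring

theorem dotProduct_mul_mul_mulVec {S : Matrix ι ι ℝ} (hS : S.IsSymm) (M : Matrix ι ι ℝ)
    (f : ι → ℝ) : f ⬝ᵥ (S * M * S) *ᵥ f = (S *ᵥ f) ⬝ᵥ M *ᵥ (S *ᵥ f) := by
  rw [← mulVec_mulVec, ← mulVec_mulVec, dotProduct_mulVec, ← mulVec_transpose, hS.eq]

end QuadraticForm

section CanonicalDuality

variable {ι κ μ : Type*} [Fintype κ] [Fintype μ]
  {A : Matrix ι ι ℝ} {Q : κ → Matrix ι ι ℝ} {B : μ → Matrix ι ι ℝ} {f : ι → ℝ} {d : κ → ℝ}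
  {c : μ → ℝ} {β : ℝ} {α : μ → ℝ}

variable (A Q B) in
def dualMatrix (ζ : κ ⊕ μ → ℝ) : Matrix ι ι ℝ :=
  A + ∑ i, ζ (Sum.inl i) • Q i + ∑ i, ζ (Sum.inr i) • B i

theorem isSymm_dualMatrix (hA : A.IsSymm) (hQ : ∀ i, (Q i).IsSymm) (hB : ∀ i, (B i).IsSymm)
    (ζ : κ ⊕ μ → ℝ) : (dualMatrix A Q B ζ).IsSymm := by
  simp only [IsSymm, dualMatrix, transpose_add, transpose_sum, transpose_smul, hA.eq,
    fun i => (hQ i).eq, fun i => (hB i).eq]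

variable [Fintype ι]

noncomputable def quadMeasure (M : Matrix ι ι ℝ) (e : ℝ) (x : ι → ℝ) : ℝ :=
  1 / 2 * (x ⬝ᵥ M *ᵥ x) + e

variable (A Q B f d c β α) in
noncomputable def primal (x : ι → ℝ) : ℝ :=
  1 / 2 * (x ⬝ᵥ A *ᵥ x) - f ⬝ᵥ x + 1 / β * log (1 + ∑ i, exp (β * quadMeasure (Q i) (d i) x))
    + ∑ i, α i / 2 * quadMeasure (B i) (c i) x ^ 2

theorem dualMatrix_mulVec (ζ : κ ⊕ μ → ℝ) (x : ι → ℝ) : dualMatrix A Q B ζ *ᵥ x =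
    A *ᵥ x + ∑ i, ζ (Sum.inl i) • Q i *ᵥ x + ∑ i, ζ (Sum.inr i) • B i *ᵥ x := by
  simp only [dualMatrix, add_mulVec, sum_mulVec, smul_mulVec]

theorem hasFDerivAt_quadMeasure {M : Matrix ι ι ℝ} (hM : M.IsSymm) (e : ℝ) (x : ι → ℝ) :
    HasFDerivAt (quadMeasure M e) (dotProductCLM (M *ᵥ x)) x :=
  (hasFDerivAt_half_dotProduct_mulVec_self hM x).add_const e

theorem hasFDerivAt_primal (hA : A.IsSymm) (hQ : ∀ i, (Q i).IsSymm) (hB : ∀ i, (B i).IsSymm)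
    (hβ : β ≠ 0) {x : ι → ℝ} {ζ : κ ⊕ μ → ℝ}
    (hτ : ∀ i, ζ (Sum.inl i) = exp (β * quadMeasure (Q i) (d i) x)
      / (1 + ∑ j, exp (β * quadMeasure (Q j) (d j) x)))
    (hσ : ∀ i, ζ (Sum.inr i) = α i * quadMeasure (B i) (c i) x) :
    HasFDerivAt (primal A Q B f d c β α) (dotProductCLM (dualMatrix A Q B ζ *ᵥ x - f)) x := by
  have hlse := HasFDerivAt.inv_mul_log_one_add_sum_exp_mul hβ
    fun i => hasFDerivAt_quadMeasure (hQ i) (d i) x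
  have hpen : ∀ i, HasFDerivAt (fun y => α i / 2 * quadMeasure (B i) (c i) y ^ 2)
      ((α i * quadMeasure (B i) (c i) x) • dotProductCLM (B i *ᵥ x)) x := fun i =>
    (((hasFDerivAt_quadMeasure (hB i) (c i) x).pow 2).const_mul (α i / 2)).congr_fderiv <| by
      rw [smul_smul]
      congr 1
      norm_num
      ring
  refine ((((hasFDerivAt_half_dotProduct_mulVec_self hA x).sub
    (dotProductCLM f).hasFDerivAt).add hlse).add
      (HasFDerivAt.fun_sum fun i (_ : i ∈ Finset.univ) => hpen i)).congr_fderiv ?_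
  simp only [dualMatrix_mulVec, map_sub, map_add, map_sum, map_smul, hτ, hσ]
  abel

theorem primal_eq_of_stationary (hβ : β ≠ 0) (hα : ∀ i, α i ≠ 0) {x : ι → ℝ} {ζ : κ ⊕ μ → ℝ}
    (hpos : ∀ i, 0 < ζ (Sum.inl i)) (hsum : ∑ i, ζ (Sum.inl i) < 1)
    (hε : ∀ i, quadMeasure (Q i) (d i) x
      = 1 / β * log (ζ (Sum.inl i) / (1 - ∑ j, ζ (Sum.inl j))))
    (hξ : ∀ i, quadMeasure (B i) (c i) x = ζ (Sum.inr i) / α i)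
    (hx : dualMatrix A Q B ζ *ᵥ x = f) :
    primal A Q B f d c β α x = -(1 / 2) * (f ⬝ᵥ x)
      - (1 / β * (∑ i, ζ (Sum.inl i) * log (ζ (Sum.inl i))
          + (1 - ∑ i, ζ (Sum.inl i)) * log (1 - ∑ i, ζ (Sum.inl i)))
        - ∑ i, d i * ζ (Sum.inl i))
      - (∑ i, ζ (Sum.inr i) ^ 2 / (2 * α i) - ∑ i, c i * ζ (Sum.inr i)) := by
  have hpen : ∀ i, α i / 2 * quadMeasure (B i) (c i) x ^ 2
      = ζ (Sum.inr i) * quadMeasure (B i) (c i) x - ζ (Sum.inr i) ^ 2 / (2 * α i) := fun i => by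
    rw [hξ]
    field_simp [hα i]
    ring
  have hτε : ∑ i, ζ (Sum.inl i) * quadMeasure (Q i) (d i) x
      = 1 / 2 * ∑ i, ζ (Sum.inl i) * (x ⬝ᵥ Q i *ᵥ x) + ∑ i, d i * ζ (Sum.inl i) := by
    simp only [quadMeasure, Finset.mul_sum, ← Finset.sum_add_distrib]
    exact Finset.sum_congr rfl fun i _ => by ring
  have hσξ : ∑ i, ζ (Sum.inr i) * quadMeasure (B i) (c i) x
      = 1 / 2 * ∑ i, ζ (Sum.inr i) * (x ⬝ᵥ B i *ᵥ x) + ∑ i, c i * ζ (Sum.inr i) := by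
    simp only [quadMeasure, Finset.mul_sum, ← Finset.sum_add_distrib]
    exact Finset.sum_congr rfl fun i _ => by ring
  have hfx : f ⬝ᵥ x = x ⬝ᵥ A *ᵥ x + ∑ i, ζ (Sum.inl i) * (x ⬝ᵥ Q i *ᵥ x)
      + ∑ i, ζ (Sum.inr i) * (x ⬝ᵥ B i *ᵥ x) := by
    rw [← hx, dotProduct_comm, dualMatrix_mulVec]
    simp only [dotProduct_add, dotProduct_sum, dotProduct_smul, smul_eq_mul]
  rw [primal, inv_mul_log_one_add_sum_exp_mul hβ hpos hsum hε,
    Finset.sum_congr rfl fun i _ => hpen i, Finset.sum_sub_distrib, hτε, hσξ]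
  linear_combination (-1 / 2 : ℝ) * hfx

end CanonicalDuality

theorem complementary_dual_principle_general
    {n p r : ℕ}
    (A : Matrix (Fin n) (Fin n) ℝ) (hA : A.IsSymm)
    (Q : Fin p → Matrix (Fin n) (Fin n) ℝ) (hQ : ∀ i, (Q i).IsSymm)
    (B : Fin r → Matrix (Fin n) (Fin n) ℝ) (hB : ∀ i, (B i).IsSymm)
    (f : Fin n → ℝ) (d : Fin p → ℝ) (c : Fin r → ℝ)
    (β : ℝ) (hβ : 0 < β) (α : Fin r → ℝ) (hα : ∀ i, 0 < α i)
    (Prim : (Fin n → ℝ) → ℝ)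
    (hPrim : Prim = fun x => (1/2) * (x ⬝ᵥ A.mulVec x) - f ⬝ᵥ x
        + (1/β) * Real.log (1 + ∑ i, Real.exp (β * ((1/2) * (x ⬝ᵥ (Q i).mulVec x) + d i)))
        + ∑ i, (α i / 2) * ((1/2) * (x ⬝ᵥ (B i).mulVec x) + c i)^2)
    (Ga : ((Fin p ⊕ Fin r) → ℝ) → Matrix (Fin n) (Fin n) ℝ)
    (hGa : Ga = fun ζ => A + ∑ i, ζ (Sum.inl i) • Q i + ∑ i, ζ (Sum.inr i) • B i)
    (Dual : ((Fin p ⊕ Fin r) → ℝ) → ℝ)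
    (hDual : Dual = fun ζ => -(1/2) * (f ⬝ᵥ (Ga ζ)⁻¹.mulVec f)
        - ((1/β) * ((∑ i, ζ (Sum.inl i) * Real.log (ζ (Sum.inl i)))
            + (1 - ∑ i, ζ (Sum.inl i)) * Real.log (1 - ∑ i, ζ (Sum.inl i)))
          - ∑ i, d i * ζ (Sum.inl i))
        - (∑ i, (ζ (Sum.inr i))^2 / (2 * α i) - ∑ i, c i * ζ (Sum.inr i)))
    (zb : (Fin p ⊕ Fin r) → ℝ)
    (hpos : ∀ i, 0 < zb (Sum.inl i)) (hsum : ∑ i, zb (Sum.inl i) < 1)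
    (hdet : (Ga zb).det ≠ 0)
    (hcrit1 : ∀ i, (1/2) * (f ⬝ᵥ ((Ga zb)⁻¹ * Q i * (Ga zb)⁻¹).mulVec f) + d i
        = (1/β) * Real.log (zb (Sum.inl i) / (1 - ∑ j, zb (Sum.inl j))))
    (hcrit2 : ∀ i, (1/2) * (f ⬝ᵥ ((Ga zb)⁻¹ * B i * (Ga zb)⁻¹).mulVec f) + c i
        = zb (Sum.inr i) / α i)
    (xb : Fin n → ℝ) (hxb : xb = (Ga zb)⁻¹.mulVec f) :
    fderiv ℝ Prim xb = 0 ∧ Prim xb = Dual zb := by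
  have hG : Ga zb = dualMatrix A Q B zb := by rw [hGa]; rfl
  rw [hG] at hdet hcrit1 hcrit2 hxb
  have hGx : dualMatrix A Q B zb *ᵥ xb = f := by
    rw [hxb, mulVec_mulVec, mul_nonsing_inv _ (isUnit_iff_ne_zero.mpr hdet), one_mulVec]
  have hGinv : (dualMatrix A Q B zb)⁻¹.IsSymm := by
    rw [IsSymm, transpose_nonsing_inv, (isSymm_dualMatrix hA hQ hB zb).eq]
  have hε : ∀ i, quadMeasure (Q i) (d i) xb
      = 1 / β * Real.log (zb (Sum.inl i) / (1 - ∑ j, zb (Sum.inl j))) := fun i => by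
    rw [quadMeasure, hxb, ← dotProduct_mul_mul_mulVec hGinv, hcrit1]
  have hξ : ∀ i, quadMeasure (B i) (c i) xb = zb (Sum.inr i) / α i := fun i => by
    rw [quadMeasure, hxb, ← dotProduct_mul_mul_mulVec hGinv, hcrit2]
  subst hPrim hDual
  constructor
  · have hgrad := hasFDerivAt_primal (f := f) hA hQ hB hβ.ne'
      (fun i => (exp_mul_div_one_add_sum_exp_mul hβ.ne' hpos hsum hε i).symm)
      (fun i => by rw [hξ, mul_div_cancel₀ _ (hα i).ne'])
    rw [hGx, sub_self, map_zero] at hgrad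
    exact hgrad.fderiv
  · simp only [hG, ← hxb]
    exact primal_eq_of_stationary hβ.ne' (fun i => (hα i).ne') hpos hsum hε hξ hGx

/-- **Complementary-dual principle** (Theorem 1 of Chen–Gao).
If `ζ̄ ∈ 𝓢ₐ` is a critical point of the canonical dual function `Π^d`
(i.e. it satisfies the explicit stationarity equations), then
`x̄ = Gₐ(ζ̄)⁻¹ f` is a critical point of the primal function `Π`
(its gradient vanishes at `x̄`) and `Π(x̄) = Π^d(ζ̄)`. -/
theorem complementary_dual_principle
    {n p r : ℕ} (hn : 0 < n) (hp : 0 < p) (hr : 0 < r)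
    (A : Matrix (Fin n) (Fin n) ℝ) (hA : A.IsSymm)
    (Q : Fin p → Matrix (Fin n) (Fin n) ℝ) (hQ : ∀ i, (Q i).IsSymm)
    (B : Fin r → Matrix (Fin n) (Fin n) ℝ) (hB : ∀ i, (B i).IsSymm)
    (f : Fin n → ℝ) (d : Fin p → ℝ) (c : Fin r → ℝ)
    (β : ℝ) (hβ : 0 < β) (α : Fin r → ℝ) (hα : ∀ i, 0 < α i)
    (Prim : (Fin n → ℝ) → ℝ)
    (hPrim : Prim = fun x => (1/2) * (x ⬝ᵥ A.mulVec x) - f ⬝ᵥ x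
        + (1/β) * Real.log (1 + ∑ i, Real.exp (β * ((1/2) * (x ⬝ᵥ (Q i).mulVec x) + d i)))
        + ∑ i, (α i / 2) * ((1/2) * (x ⬝ᵥ (B i).mulVec x) + c i)^2)
    (Ga : ((Fin p ⊕ Fin r) → ℝ) → Matrix (Fin n) (Fin n) ℝ)
    (hGa : Ga = fun ζ => A + ∑ i, ζ (Sum.inl i) • Q i + ∑ i, ζ (Sum.inr i) • B i)
    (Dual : ((Fin p ⊕ Fin r) → ℝ) → ℝ)
    (hDual : Dual = fun ζ => -(1/2) * (f ⬝ᵥ (Ga ζ)⁻¹.mulVec f)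
        - ((1/β) * ((∑ i, ζ (Sum.inl i) * Real.log (ζ (Sum.inl i)))
            + (1 - ∑ i, ζ (Sum.inl i)) * Real.log (1 - ∑ i, ζ (Sum.inl i)))
          - ∑ i, d i * ζ (Sum.inl i))
        - (∑ i, (ζ (Sum.inr i))^2 / (2 * α i) - ∑ i, c i * ζ (Sum.inr i)))
    (zb : (Fin p ⊕ Fin r) → ℝ)
    (hpos : ∀ i, 0 < zb (Sum.inl i)) (hsum : ∑ i, zb (Sum.inl i) < 1)
    (hdet : (Ga zb).det ≠ 0)
    (hcrit1 : ∀ i, (1/2) * (f ⬝ᵥ ((Ga zb)⁻¹ * Q i * (Ga zb)⁻¹).mulVec f) + d i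
        = (1/β) * Real.log (zb (Sum.inl i) / (1 - ∑ j, zb (Sum.inl j))))
    (hcrit2 : ∀ i, (1/2) * (f ⬝ᵥ ((Ga zb)⁻¹ * B i * (Ga zb)⁻¹).mulVec f) + c i
        = zb (Sum.inr i) / α i)
    (xb : Fin n → ℝ) (hxb : xb = (Ga zb)⁻¹.mulVec f) :
    fderiv ℝ Prim xb = 0 ∧ Prim xb = Dual zb :=
  complementary_dual_principle_general A hA Q hQ B hB f d c β hβ α hα Prim hPrim Ga hGa Dual hDual
    zb hpos hsum hdet hcrit1 hcrit2 xb hxb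
end

section
/- Existence condition for the quartic dual problem: Assume −λ₁ ≥ αc. Then there exists σ > −λ₁ satisfying the critical-point equation ½Σ_{i=1}^n f̂ᵢ²/(λᵢ+σ)² + c − σ/α = 0 if and only if Σ_{i=1}^k f̂ᵢ² ≠ 0 or ½Σ_{i=k+1}^n f̂ᵢ²/(λᵢ−λ₁)² + λ₁/α + c > 0. -/
/-!
On `σ > -λ₁` the derivative `g` of the dual function is continuous and tends to `-∞`, so it has
a zero there as soon as it is positive somewhere near `-λ₁`. It is if `f̂ᵢ ≠ 0` for some `i ≤ k`,
since then the term `f̂ᵢ² / (λ₁ + σ)²` blows up at `-λ₁`, and it is if the part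
`h(σ) = ½ Σ_{i>k} f̂ᵢ² / (λᵢ + σ)² + c - σ/α ≤ g(σ)`, which is continuous at `-λ₁`, is positive
there. Conversely, if `f̂ᵢ = 0` for all `i ≤ k` then `g = h`, and `h` is strictly decreasing on
`[-λ₁, ∞)`, so a zero of `g` forces `h(-λ₁) > 0`.
-/

open Filter Topology Finset

namespace QuarticDual

variable {ι : Type*}

/-- The derivative of the canonical dual function `Π₁^d`, with the sum restricted to `s`. -/
noncomputable def dualDeriv (lam x : ι → ℝ) (α c : ℝ) (s : Finset ι) (σ : ℝ) : ℝ :=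
  (1/2) * (∑ i ∈ s, x i ^ 2 / (lam i + σ) ^ 2) + c - σ / α

variable {lam x : ι → ℝ} {α c : ℝ}

lemma dualDeriv_le_of_subset {s t : Finset ι} (hst : s ⊆ t) (σ : ℝ) :
    dualDeriv lam x α c s σ ≤ dualDeriv lam x α c t σ := by
  have := sum_le_sum_of_subset_of_nonneg hst (f := fun i => x i ^ 2 / (lam i + σ) ^ 2)
    fun i _ _ => by positivity
  unfold dualDeriv
  linarith

lemma dualDeriv_eq_of_subset {s t : Finset ι} (hst : s ⊆ t) (hx : ∀ i ∈ t, i ∉ s → x i = 0)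
    (σ : ℝ) : dualDeriv lam x α c s σ = dualDeriv lam x α c t σ := by
  unfold dualDeriv
  rw [sum_subset hst fun i hi his => by simp [hx i hi his]]

lemma dualDeriv_neg (s : Finset ι) (m : ℝ) :
    dualDeriv lam x α c s (-m) = (1/2) * (∑ i ∈ s, x i ^ 2 / (lam i - m) ^ 2) + m / α + c := by
  simp only [dualDeriv, ← sub_eq_add_neg, neg_div]
  ring

lemma dualDeriv_lt_of_lt (hα : 0 < α) {s : Finset ι} {σ τ : ℝ} (hσ : ∀ i ∈ s, 0 < lam i + σ)
    (hστ : σ < τ) : dualDeriv lam x α c s τ < dualDeriv lam x α c s σ := by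
  have hsum : ∑ i ∈ s, x i ^ 2 / (lam i + τ) ^ 2 ≤ ∑ i ∈ s, x i ^ 2 / (lam i + σ) ^ 2 :=
    sum_le_sum fun i hi => by
      have := hσ i hi
      gcongr
  have : σ / α < τ / α := div_lt_div_of_pos_right hστ hα
  unfold dualDeriv
  linarith

lemma continuousAt_dualDeriv {s : Finset ι} {σ : ℝ} (hσ : ∀ i ∈ s, lam i + σ ≠ 0) :
    ContinuousAt (dualDeriv lam x α c s) σ := by
  have hsum : ContinuousAt (fun σ => ∑ i ∈ s, x i ^ 2 / (lam i + σ) ^ 2) σ :=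
    tendsto_finsetSum s fun i hi => by
      have := hσ i hi
      exact ContinuousAt.tendsto (by fun_prop (disch := positivity))
  unfold dualDeriv
  fun_prop

lemma tendsto_dualDeriv_atTop_atBot (hα : 0 < α) (s : Finset ι) :
    Tendsto (dualDeriv lam x α c s) atTop atBot := by
  have hsq (i : ι) : Tendsto (fun σ : ℝ => (lam i + σ) ^ 2) atTop atTop :=
    (tendsto_pow_atTop two_ne_zero).comp (tendsto_atTop_add_const_left atTop (lam i) tendsto_id)
  have hsum : Tendsto (fun σ => (1/2) * (∑ i ∈ s, x i ^ 2 / (lam i + σ) ^ 2) + c) atTop (𝓝 c) := by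
    simpa using ((tendsto_finsetSum s fun i _ => tendsto_const_nhds.div_atTop (hsq i)).const_mul
      (1/2 : ℝ)).add_const c
  have hlin : Tendsto (fun σ => -(σ / α)) atTop atBot :=
    tendsto_neg_atTop_atBot.comp (tendsto_id.atTop_div_const hα)
  exact (hsum.add_atBot hlin).congr fun σ => by unfold dualDeriv; ring

lemma tendsto_dualDeriv_singleton_nhdsGT {i : ι} (hi : x i ≠ 0) :
    Tendsto (dualDeriv lam x α c {i}) (𝓝[>] (-lam i)) atTop := by
  have hsq : Tendsto (fun σ => (lam i + σ) ^ 2) (𝓝[>] (-lam i)) (𝓝[>] 0) := by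
    refine tendsto_nhdsWithin_iff.2 ⟨tendsto_nhdsWithin_of_tendsto_nhds ?_, ?_⟩
    · simpa using (by fun_prop : Continuous fun σ => (lam i + σ) ^ 2).tendsto (-lam i)
    · filter_upwards [self_mem_nhdsWithin] with σ (hσ : -lam i < σ)
      exact pow_pos (by linarith : 0 < lam i + σ) 2
  have hlin : Tendsto (fun σ => c - σ / α) (𝓝[>] (-lam i)) (𝓝 (c - -lam i / α)) :=
    tendsto_nhdsWithin_of_tendsto_nhds ((by fun_prop : Continuous fun σ => c - σ / α).tendsto _)
  have hpole := hsq.inv_tendsto_nhdsGT_zero.const_mul_atTop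
    (by positivity : 0 < (1/2) * x i ^ 2)
  exact (hpole.atTop_add hlin).congr fun σ => by simp [dualDeriv]; ring

lemma exists_dualDeriv_eq_zero (hα : 0 < α) {s : Finset ι} {a : ℝ} (ha : ∀ i ∈ s, 0 < lam i + a)
    (hpos : 0 < dualDeriv lam x α c s a) : ∃ σ, a ≤ σ ∧ dualDeriv lam x α c s σ = 0 := by
  obtain ⟨b, hb, hab⟩ := (((tendsto_dualDeriv_atTop_atBot (lam := lam) (x := x) (c := c) hα s
    ).eventually_le_atBot 0).and (eventually_ge_atTop a)).exists
  have hcont : ContinuousOn (dualDeriv lam x α c s) (Set.Icc a b) := fun σ hσ =>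
    (continuousAt_dualDeriv fun i hi =>
      (by linarith [ha i hi, hσ.1] : 0 < lam i + σ).ne').continuousWithinAt
  obtain ⟨σ, hσ, hroot⟩ := intermediate_value_Icc' hab hcont ⟨hb, hpos.le⟩
  exact ⟨σ, hσ.1, hroot⟩

lemma exists_dualDeriv_eq_zero_of_eventually_pos [Fintype ι] (hα : 0 < α) {m : ℝ}
    (hm : ∀ i, m ≤ lam i) {s : Finset ι}
    (hpos : ∀ᶠ σ in 𝓝[>] (-m), 0 < dualDeriv lam x α c s σ) :
    ∃ σ, -m < σ ∧ dualDeriv lam x α c univ σ = 0 := by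
  obtain ⟨a, ha, hma⟩ := (hpos.and self_mem_nhdsWithin).exists
  obtain ⟨σ, haσ, hσ⟩ := exists_dualDeriv_eq_zero hα
    (fun i _ => (by linarith [hm i, hma] : 0 < lam i + a))
    (ha.trans_le (dualDeriv_le_of_subset (subset_univ s) a))
  exact ⟨σ, hma.trans_le haσ, hσ⟩

end QuarticDual

open Matrix QuarticDual

theorem quartic_existence_general
    {n : ℕ}
    (lam : Fin n → ℝ)
    (fhat : Fin n → ℝ)
    (lam1 : ℝ)
    (k : ℕ)
    (heqk : ∀ i : Fin n, (i : ℕ) < k → lam i = lam1)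
    (hltk : ∀ i : Fin n, k ≤ (i : ℕ) → lam1 < lam i)
    (α : ℝ) (hα : 0 < α) (c : ℝ) :
    (∃ σ : ℝ, -lam1 < σ ∧ (1/2) * (∑ i, fhat i ^ 2 / (lam i + σ) ^ 2) + c - σ / α = 0) ↔
    ((∑ i ∈ Finset.univ.filter (fun i : Fin n => (i : ℕ) < k), fhat i ^ 2) ≠ 0 ∨
      0 < (1/2) * (∑ i ∈ Finset.univ.filter (fun i : Fin n => k ≤ (i : ℕ)),
            fhat i ^ 2 / (lam i - lam1) ^ 2) + lam1 / α + c) := by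
  set low := univ.filter fun i : Fin n => (i : ℕ) < k
  set high := univ.filter fun i : Fin n => k ≤ (i : ℕ)
  have hhigh : ∀ i ∈ high, 0 < lam i + -lam1 := fun i hi => by
    linarith [hltk i (mem_filter.1 hi).2]
  rw [← dualDeriv_neg]
  change (∃ σ, -lam1 < σ ∧ dualDeriv lam fhat α c univ σ = 0) ↔ _
  constructor
  · rintro ⟨σ, hσ, hroot⟩
    refine or_iff_not_imp_left.2 fun hlow => ?_
    have hlow_sq := (sum_eq_zero_iff_of_nonneg fun i _ => sq_nonneg (fhat i)).1 (not_not.1 hlow)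
    have hzero : ∀ i ∈ univ, i ∉ high → fhat i = 0 := fun i _ hi =>
      pow_eq_zero_iff two_ne_zero |>.1 <| hlow_sq i (by simpa [low, high] using hi)
    rw [← dualDeriv_eq_of_subset (subset_univ high) hzero] at hroot
    exact hroot ▸ dualDeriv_lt_of_lt hα hhigh hσ
  · intro h
    have hlam1_le (i : Fin n) : lam1 ≤ lam i :=
      (lt_or_ge (i : ℕ) k).elim (fun h => (heqk i h).ge) fun h => (hltk i h).le
    rcases h with hlow | hhigh_pos
    · obtain ⟨i, hi, hfi⟩ := exists_ne_zero_of_sum_ne_zero hlow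
      have hblowup := tendsto_dualDeriv_singleton_nhdsGT (lam := lam) (α := α) (c := c)
        (pow_ne_zero_iff two_ne_zero |>.1 hfi)
      rw [heqk i (mem_filter.1 hi).2] at hblowup
      exact exists_dualDeriv_eq_zero_of_eventually_pos hα hlam1_le
        (hblowup.eventually_gt_atTop 0)
    · exact exists_dualDeriv_eq_zero_of_eventually_pos hα hlam1_le <| nhdsWithin_le_nhds <|
        (continuousAt_dualDeriv fun i hi => (hhigh i hi).ne').eventually
          (eventually_gt_nhds hhigh_pos)

/-- **Existence condition for the quartic dual problem** (Proposition 1 of Chen–Gao). -/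
theorem quartic_existence
    {n : ℕ} (hn : 0 < n)
    (A : Matrix (Fin n) (Fin n) ℝ) (hA : A.IsSymm)
    (lam : Fin n → ℝ) (hsort : ∀ i j : Fin n, i ≤ j → lam i ≤ lam j)
    (U : Matrix (Fin n) (Fin n) ℝ) (hUorth : U * Uᵀ = 1)
    (hAeig : A = U * Matrix.diagonal lam * Uᵀ)
    (f : Fin n → ℝ) (fhat : Fin n → ℝ) (hfhat : fhat = Uᵀ.mulVec f)
    (lam1 : ℝ) (hlam1 : lam1 = lam ⟨0, hn⟩)
    (k : ℕ) (hk0 : 0 < k) (hkn : k ≤ n)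
    (heqk : ∀ i : Fin n, (i : ℕ) < k → lam i = lam1)
    (hltk : ∀ i : Fin n, k ≤ (i : ℕ) → lam1 < lam i)
    (α : ℝ) (hα : 0 < α) (c : ℝ) (hac : α * c ≤ -lam1) :
    (∃ σ : ℝ, -lam1 < σ ∧ (1/2) * (∑ i, fhat i ^ 2 / (lam i + σ) ^ 2) + c - σ / α = 0) ↔
    ((∑ i ∈ Finset.univ.filter (fun i : Fin n => (i : ℕ) < k), fhat i ^ 2) ≠ 0 ∨
      0 < (1/2) * (∑ i ∈ Finset.univ.filter (fun i : Fin n => k ≤ (i : ℕ)),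
            fhat i ^ 2 / (lam i - lam1) ^ 2) + lam1 / α + c) :=
  quartic_existence_general lam fhat lam1 k heqk hltk α hα c
end

section
/- Uniqueness and global optimality for the quartic dual problem: Assume −λ₁ ≥ αc. If σ̄ > −λ₁ satisfies the critical-point equation ½Σ_{i=1}^n f̂ᵢ²/(λᵢ+σ̄)² + c − σ̄/α = 0, then σ̄ is the unique such point in (−λ₁, +∞), and x̄ = (A + σ̄I)⁻¹f is a global minimizer of Π₁ on ℝⁿ. -/
/-!
Uniqueness: the dual gradient `σ ↦ ½ ∑ f̂ᵢ² / (λᵢ + σ)² + c - σ / α` is strictly decreasing on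
`(-λ₁, ∞)`, so it vanishes at most once there.

Optimality: with `t = ½ ‖x‖²`, for every `x`
`Π₁(x) = (½ xᵀ(A + σ̄I)x - fᵀx) + (α/2 (t + c)² - σ̄ t)`.
The first bracket is a positive semidefinite quadratic, minimised at `x̄ = (A + σ̄I)⁻¹f`; the second is a
convex parabola in `t`, minimised where `α (t + c) = σ̄`. In eigen-coordinates `‖x̄‖² = ∑ f̂ᵢ² / (λᵢ + σ̄)²`,
so the critical-point equation says exactly that `x̄` attains both minima at once.
-/

open Matrix Set

section Orthogonal

variable {ι : Type*} [Fintype ι] [DecidableEq ι]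

section CommRing

variable {R : Type*} [CommRing R] {U : Matrix ι ι R}

theorem transpose_mulVec_dotProduct_self (hU : U * Uᵀ = 1) (x : ι → R) :
    Uᵀ *ᵥ x ⬝ᵥ Uᵀ *ᵥ x = x ⬝ᵥ x := by
  rw [dotProduct_mulVec, vecMul_transpose, mulVec_mulVec, hU, one_mulVec]

theorem conj_diagonal_add_smul_one (hU : U * Uᵀ = 1) (d : ι → R) (σ : R) :
    U * diagonal d * Uᵀ + σ • 1 = U * diagonal (fun i => d i + σ) * Uᵀ := by
  rw [← diagonal_add, smul_one_eq_diagonal, Matrix.mul_add, Matrix.add_mul, ← smul_one_eq_diagonal,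
    Matrix.mul_smul, Matrix.mul_one, Matrix.smul_mul, hU]

theorem det_conj_diagonal (hU : U * Uᵀ = 1) (d : ι → R) :
    (U * diagonal d * Uᵀ).det = ∏ i, d i := by
  rw [det_mul, det_mul, det_diagonal, mul_right_comm, ← det_mul, hU, det_one, one_mul]

theorem diagonal_mulVec_transpose_mulVec (hU : U * Uᵀ = 1) (d x : ι → R) :
    diagonal d *ᵥ (Uᵀ *ᵥ x) = Uᵀ *ᵥ ((U * diagonal d * Uᵀ) *ᵥ x) := by
  rw [mulVec_mulVec, mulVec_mulVec, ← Matrix.mul_assoc, ← Matrix.mul_assoc,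
    mul_eq_one_comm.mp hU, Matrix.one_mul]

theorem posSemidef_conj_diagonal [PartialOrder R] [StarRing R] [StarOrderedRing R] [TrivialStar R]
    (U : Matrix ι ι R) {d : ι → R} (hd : ∀ i, 0 ≤ d i) : (U * diagonal d * Uᵀ).PosSemidef := by
  rw [← conjTranspose_eq_transpose_of_trivial]
  exact (posSemidef_diagonal_iff.mpr hd).mul_mul_conjTranspose_same U

end CommRing

theorem transpose_mulVec_apply_eq_div {K : Type*} [Field K] {U : Matrix ι ι K} (hU : U * Uᵀ = 1)
    {d x y : ι → K} (h : (U * diagonal d * Uᵀ) *ᵥ x = y) {i : ι} (hd : d i ≠ 0) :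
    (Uᵀ *ᵥ x) i = (Uᵀ *ᵥ y) i / d i := by
  rw [← h, ← diagonal_mulVec_transpose_mulVec hU, mulVec_diagonal, mul_div_cancel_left₀ _ hd]

end Orthogonal

section Quadratic

variable {ι K : Type*} [Fintype ι]

theorem dotProduct_add_smul_one_mulVec [DecidableEq ι] [CommSemiring K] (A : Matrix ι ι K) (σ : K)
    (x : ι → K) :
    x ⬝ᵥ (A + σ • 1) *ᵥ x = x ⬝ᵥ A *ᵥ x + σ * (x ⬝ᵥ x) := by
  rw [add_mulVec, smul_mulVec, one_mulVec, dotProduct_add, dotProduct_smul, smul_eq_mul]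

theorem Matrix.PosSemidef.half_dotProduct_mulVec_sub_le [Field K] [LinearOrder K]
    [IsStrictOrderedRing K] [StarRing K] [TrivialStar K] {B : Matrix ι ι K} (hB : B.PosSemidef)
    {f xb : ι → K} (hxb : B *ᵥ xb = f) (x : ι → K) :
    (1/2) * (xb ⬝ᵥ B *ᵥ xb) - f ⬝ᵥ xb ≤ (1/2) * (x ⬝ᵥ B *ᵥ x) - f ⬝ᵥ x := by
  have hsymm : xb ⬝ᵥ B *ᵥ x = x ⬝ᵥ f := by
    rw [dotProduct_mulVec, ← mulVec_transpose, ← conjTranspose_eq_transpose_of_trivial,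
      hB.isHermitian.eq, hxb, dotProduct_comm]
  have hnonneg := hB.dotProduct_mulVec_nonneg (x - xb)
  simp only [star_trivial, mulVec_sub, sub_dotProduct, dotProduct_sub, hsymm, hxb] at hnonneg
  rw [hxb]
  linarith [dotProduct_comm f x, dotProduct_comm f xb]

end Quadratic

theorem half_mul_add_sq_sub_mul_le {α c σ s : ℝ} (hα : 0 ≤ α) (hσ : σ = α * (s + c)) (t : ℝ) :
    α / 2 * (s + c) ^ 2 - σ * s ≤ α / 2 * (t + c) ^ 2 - σ * t := by
  subst hσ
  nlinarith [mul_nonneg hα (sq_nonneg (t - s))]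

section Dual

variable {ι : Type*} [Fintype ι]

/-- The derivative of the canonical dual function `Π₁ᵈ`. -/
noncomputable def dualGrad (lam fhat : ι → ℝ) (α c σ : ℝ) : ℝ :=
  (1/2) * (∑ i, fhat i ^ 2 / (lam i + σ) ^ 2) + c - σ / α

theorem strictAntiOn_dualGrad {lam : ι → ℝ} {m : ℝ} (hlam : ∀ i, m ≤ lam i) (fhat : ι → ℝ)
    {α : ℝ} (hα : 0 < α) (c : ℝ) : StrictAntiOn (dualGrad lam fhat α c) (Ioi (-m)) := by
  intro a ha b hb hab
  have hsum : ∑ i, fhat i ^ 2 / (lam i + b) ^ 2 ≤ ∑ i, fhat i ^ 2 / (lam i + a) ^ 2 := by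
    refine Finset.sum_le_sum fun i _ => ?_
    have ha' : 0 < lam i + a := by linarith [hlam i, mem_Ioi.mp ha]
    exact div_le_div_of_nonneg_left (sq_nonneg _) (by positivity)
      (pow_le_pow_left₀ ha'.le (by linarith) 2)
  have hdiv : a / α < b / α := div_lt_div_of_pos_right hab hα
  unfold dualGrad
  linarith

end Dual

theorem quartic_uniqueness_global_general
    {n : ℕ} (hn : 0 < n)
    (A : Matrix (Fin n) (Fin n) ℝ)
    (lam : Fin n → ℝ) (hsort : ∀ i j : Fin n, i ≤ j → lam i ≤ lam j)
    (U : Matrix (Fin n) (Fin n) ℝ) (hUorth : U * Uᵀ = 1)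
    (hAeig : A = U * Matrix.diagonal lam * Uᵀ)
    (f : Fin n → ℝ) (fhat : Fin n → ℝ) (hfhat : fhat = Uᵀ.mulVec f)
    (lam1 : ℝ) (hlam1 : lam1 = lam ⟨0, hn⟩)
    (α : ℝ) (hα : 0 < α) (c : ℝ)
    (Pi1 : (Fin n → ℝ) → ℝ)
    (hPi1 : Pi1 = fun x : Fin n → ℝ => (1/2) * (x ⬝ᵥ A.mulVec x) - f ⬝ᵥ x
        + (α / 2) * ((1/2) * (x ⬝ᵥ x) + c) ^ 2)
    (sb : ℝ) (hsb : -lam1 < sb)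
    (hcrit : (1/2) * (∑ i, fhat i ^ 2 / (lam i + sb) ^ 2) + c - sb / α = 0)
    (xb : Fin n → ℝ) (hxb : xb = (A + sb • (1 : Matrix (Fin n) (Fin n) ℝ))⁻¹.mulVec f) :
    (∀ σ : ℝ, -lam1 < σ → (1/2) * (∑ i, fhat i ^ 2 / (lam i + σ) ^ 2) + c - σ / α = 0 → σ = sb) ∧
    (∀ x : Fin n → ℝ, Pi1 xb ≤ Pi1 x) := by
  have hlam : ∀ i, lam1 ≤ lam i := fun i => hlam1 ▸ hsort _ _ (Fin.mk_le_mk.mpr (Nat.zero_le _))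
  refine ⟨fun σ hσ hcritσ =>
    (strictAntiOn_dualGrad hlam fhat hα c).injOn hσ hsb (hcritσ.trans hcrit.symm), ?_⟩
  have hpos : ∀ i, 0 < lam i + sb := fun i => by linarith [hlam i]
  have hB : A + sb • 1 = U * diagonal (fun i => lam i + sb) * Uᵀ :=
    hAeig ▸ conj_diagonal_add_smul_one hUorth lam sb
  have hBxb : (A + sb • 1) *ᵥ xb = f := by
    have hdet : IsUnit (A + sb • 1).det := by
      rw [hB, det_conj_diagonal hUorth]
      exact (Finset.prod_pos fun i _ => hpos i).ne'.isUnit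
    rw [hxb, mulVec_mulVec, mul_nonsing_inv _ hdet, one_mulVec]
  have hyb : ∀ i, (Uᵀ *ᵥ xb) i = fhat i / (lam i + sb) := fun i => by
    rw [hfhat]
    exact transpose_mulVec_apply_eq_div hUorth (hB ▸ hBxb) (hpos i).ne'
  have hnorm : sb = α * ((1/2) * (xb ⬝ᵥ xb) + c) := by
    rw [← transpose_mulVec_dotProduct_self hUorth, dotProduct]
    simp only [hyb, ← sq, div_pow]
    have hsbα : sb / α = (1/2) * (∑ i, fhat i ^ 2 / (lam i + sb) ^ 2) + c := by linarith
    rw [← hsbα]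
    field_simp
  have hPSD : (A + sb • 1).PosSemidef := hB ▸ posSemidef_conj_diagonal U fun i => (hpos i).le
  intro x
  have hquad := hPSD.half_dotProduct_mulVec_sub_le hBxb x
  have hrad := half_mul_add_sq_sub_mul_le hα.le hnorm ((1/2) * (x ⬝ᵥ x))
  rw [dotProduct_add_smul_one_mulVec, dotProduct_add_smul_one_mulVec] at hquad
  subst hPi1
  linear_combination hquad + hrad

/-- **Uniqueness and global optimality for the quartic dual problem**
(Proposition 1 of Chen–Gao). -/
theorem quartic_uniqueness_global
    {n : ℕ} (hn : 0 < n)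
    (A : Matrix (Fin n) (Fin n) ℝ) (hA : A.IsSymm)
    (lam : Fin n → ℝ) (hsort : ∀ i j : Fin n, i ≤ j → lam i ≤ lam j)
    (U : Matrix (Fin n) (Fin n) ℝ) (hUorth : U * Uᵀ = 1)
    (hAeig : A = U * Matrix.diagonal lam * Uᵀ)
    (f : Fin n → ℝ) (fhat : Fin n → ℝ) (hfhat : fhat = Uᵀ.mulVec f)
    (lam1 : ℝ) (hlam1 : lam1 = lam ⟨0, hn⟩)
    (k : ℕ) (hk0 : 0 < k) (hkn : k ≤ n)
    (heqk : ∀ i : Fin n, (i : ℕ) < k → lam i = lam1)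
    (hltk : ∀ i : Fin n, k ≤ (i : ℕ) → lam1 < lam i)
    (α : ℝ) (hα : 0 < α) (c : ℝ) (hac : α * c ≤ -lam1)
    (Pi1 : (Fin n → ℝ) → ℝ)
    (hPi1 : Pi1 = fun x : Fin n → ℝ => (1/2) * (x ⬝ᵥ A.mulVec x) - f ⬝ᵥ x
        + (α / 2) * ((1/2) * (x ⬝ᵥ x) + c) ^ 2)
    (sb : ℝ) (hsb : -lam1 < sb)
    (hcrit : (1/2) * (∑ i, fhat i ^ 2 / (lam i + sb) ^ 2) + c - sb / α = 0)
    (xb : Fin n → ℝ) (hxb : xb = (A + sb • (1 : Matrix (Fin n) (Fin n) ℝ))⁻¹.mulVec f) :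
    (∀ σ : ℝ, -lam1 < σ → (1/2) * (∑ i, fhat i ^ 2 / (lam i + σ) ^ 2) + c - σ / α = 0 → σ = sb) ∧
    (∀ x : Fin n → ℝ, Pi1 xb ≤ Pi1 x) :=
  quartic_uniqueness_global_general hn A lam hsort U hUorth hAeig f fhat hfhat lam1 hlam1 α hα c Pi1
    hPi1 sb hsb hcrit xb hxb
end

section
/- Existence condition for the minimax dual problem: Assume −1 < λ₁ < 0. Then there exists τ with max(0, −λ₁) < τ < 1, in fact τ ∈ (−λ₁, 1), satisfying the critical-point equation ½Σ_{i=1}^n f̂ᵢ²/(λᵢ+τ)² + d − (1/β)log(τ/(1−τ)) = 0 if and only if Σ_{i=1}^k f̂ᵢ² ≠ 0 or ½Σ_{i=k+1}^n f̂ᵢ²/(λᵢ−λ₁)² − (1/β)log(−λ₁/(1+λ₁)) + d > 0. -/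
/-!
Write `g(τ) = ½ Σᵢ f̂ᵢ²/(λᵢ+τ)² + d − β⁻¹ log(τ/(1−τ))`. On `(−λ₁, 1)` it is continuous and it
tends to `−∞` as `τ → 1`, so by the intermediate value theorem it has a zero as soon as it is
positive near `−λ₁`. If some `f̂ᵢ` with `λᵢ = λ₁` is nonzero, `g` has a pole at `−λ₁` and tends to
`+∞` there. Otherwise only the indices with `λᵢ > λ₁` contribute, `g` extends to a strictly
decreasing continuous function on `[−λ₁, 1)`, and `g(−λ₁)` is the quantity of the second
alternative: `g` has a zero iff `g(−λ₁) > 0`.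
-/

open Filter Matrix Set Topology

lemma exists_mem_Ioo_eq_zero_of_tendsto_atBot {g : ℝ → ℝ} {a b : ℝ} (hab : a < b)
    (hg : ContinuousOn g (Ioo a b)) (ha : ∀ᶠ x in 𝓝[>] a, 0 < g x)
    (hb : Tendsto g (𝓝[<] b) atBot) : ∃ x ∈ Ioo a b, g x = 0 :=
  (isPreconnected_Ioo.intermediate_value₂_eventually₂
      (le_principal_iff.2 (Ioo_mem_nhdsGT hab)) (le_principal_iff.2 (Ioo_mem_nhdsLT hab))
      continuousOn_const hg (ha.mono fun _ h => h.le) (hb.eventually_le_atBot 0)).imp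
    fun _ h => ⟨h.1, h.2.symm⟩

namespace Real

lemma continuousAt_log_div_one_sub {τ : ℝ} (hτ : τ ∈ Ioo 0 1) :
    ContinuousAt (fun τ => log (τ / (1 - τ))) τ := by
  have h1τ : 0 < 1 - τ := sub_pos.2 hτ.2
  exact (continuousAt_id.div (continuousAt_const.sub continuousAt_id) h1τ.ne').log
    (div_pos hτ.1 h1τ).ne'

lemma strictMonoOn_log_div_one_sub : StrictMonoOn (fun τ => log (τ / (1 - τ))) (Ioo 0 1) := by
  intro a ha b hb hab
  have h1a : 0 < 1 - a := sub_pos.2 ha.2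
  have h1b : 0 < 1 - b := sub_pos.2 hb.2
  refine log_lt_log (div_pos ha.1 h1a) ?_
  rw [div_lt_div_iff₀ h1a h1b]
  nlinarith

lemma tendsto_log_div_one_sub_nhdsLT_one :
    Tendsto (fun τ => log (τ / (1 - τ))) (𝓝[<] 1) atTop := by
  have h1τ : Tendsto (fun τ : ℝ => 1 - τ) (𝓝[<] 1) (𝓝[>] 0) := by
    refine tendsto_nhdsWithin_iff.2 ⟨?_, ?_⟩
    · exact tendsto_nhdsWithin_of_tendsto_nhds
        ((continuous_const.sub continuous_id).tendsto' 1 0 (sub_self 1))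
    · filter_upwards [self_mem_nhdsWithin] with τ (hτ : τ < 1)
      exact sub_pos.2 hτ
  have hτ : Tendsto (fun τ : ℝ => τ) (𝓝[<] 1) (𝓝 1) := tendsto_nhdsWithin_of_tendsto_nhds tendsto_id
  exact tendsto_log_atTop.comp ((hτ.pos_mul_atTop one_pos h1τ.inv_tendsto_nhdsGT_zero).congr
    fun τ => (div_eq_mul_inv τ (1 - τ)).symm)

end Real

section DualDeriv

variable {ι : Type*} (s : Finset ι) (lam fhat : ι → ℝ) (β d : ℝ)

/-- The derivative of the canonical dual function `Π₂^d` when `s` is the whole index set. -/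
noncomputable def dualDeriv (τ : ℝ) : ℝ :=
  (1/2) * (∑ i ∈ s, fhat i ^ 2 / (lam i + τ) ^ 2) + d - (1/β) * Real.log (τ / (1 - τ))

variable {s}

lemma dualDeriv_mono {t : Finset ι} (hst : s ⊆ t) (τ : ℝ) :
    dualDeriv s lam fhat β d τ ≤ dualDeriv t lam fhat β d τ := by
  unfold dualDeriv
  gcongr (1/2) * ?_ + d - _
  exact Finset.sum_le_sum_of_subset_of_nonneg hst fun i _ _ => by positivity

lemma dualDeriv_filter {p : ι → Prop} [DecidablePred p] (h : ∀ i ∈ s, fhat i ≠ 0 → p i) :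
    dualDeriv (s.filter p) lam fhat β d = dualDeriv s lam fhat β d := by
  funext τ
  unfold dualDeriv
  rw [Finset.sum_filter_of_ne fun i hi hne => h i hi fun h0 => hne (by simp [h0])]

lemma dualDeriv_neg (μ : ℝ) : dualDeriv s lam fhat β d (-μ) =
    (1/2) * (∑ i ∈ s, fhat i ^ 2 / (lam i - μ) ^ 2) - (1/β) * Real.log (-μ / (1 + μ)) + d := by
  simp only [dualDeriv, ← sub_eq_add_neg, sub_neg_eq_add]
  ring

lemma continuousAt_sum_sq_div_add_sq {τ : ℝ} (hs : ∀ i ∈ s, lam i + τ ≠ 0) :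
    ContinuousAt (fun τ => ∑ i ∈ s, fhat i ^ 2 / (lam i + τ) ^ 2) τ :=
  tendsto_finsetSum s fun i hi => continuousAt_const.div
    ((continuousAt_const.add continuousAt_id).pow 2) (pow_ne_zero 2 (hs i hi))

lemma continuousAt_dualDeriv {τ : ℝ} (hτ : τ ∈ Ioo 0 1) (hs : ∀ i ∈ s, lam i + τ ≠ 0) :
    ContinuousAt (dualDeriv s lam fhat β d) τ :=
  ((continuousAt_const.mul (continuousAt_sum_sq_div_add_sq lam fhat hs)).add
    continuousAt_const).sub (continuousAt_const.mul (Real.continuousAt_log_div_one_sub hτ))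

lemma tendsto_dualDeriv_nhdsLT_one (hs : ∀ i ∈ s, lam i + 1 ≠ 0) (hβ : 0 < β) :
    Tendsto (dualDeriv s lam fhat β d) (𝓝[<] 1) atBot := by
  have hsum : ContinuousAt (fun τ => (1/2) * (∑ i ∈ s, fhat i ^ 2 / (lam i + τ) ^ 2) + d) 1 :=
    (continuousAt_const.mul (continuousAt_sum_sq_div_add_sq lam fhat hs)).add continuousAt_const
  have hlog := Real.tendsto_log_div_one_sub_nhdsLT_one.const_mul_atTop (one_div_pos.2 hβ)
  exact ((hsum.tendsto.mono_left nhdsWithin_le_nhds).add_atBot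
    (tendsto_neg_atTop_atBot.comp hlog)).congr fun τ => (sub_eq_add_neg _ _).symm

lemma strictAntiOn_dualDeriv {μ : ℝ} (hs : ∀ i ∈ s, μ < lam i) (hμ : μ < 0) (hβ : 0 < β) :
    StrictAntiOn (dualDeriv s lam fhat β d) (Ico (-μ) 1) := by
  intro a ha b hb hab
  have hsum : ∑ i ∈ s, fhat i ^ 2 / (lam i + b) ^ 2 ≤ ∑ i ∈ s, fhat i ^ 2 / (lam i + a) ^ 2 :=
    Finset.sum_le_sum fun i hi => by
      have : 0 < lam i + a := by linarith [hs i hi, ha.1]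
      gcongr
  have hlog := Real.strictMonoOn_log_div_one_sub ⟨by linarith [ha.1], ha.2⟩
    ⟨by linarith [ha.1], hb.2⟩ hab
  have := mul_lt_mul_of_pos_left hlog (one_div_pos.2 hβ)
  unfold dualDeriv
  linarith

lemma tendsto_dualDeriv_nhdsGT_atTop {μ : ℝ} (hμ : -μ ∈ Ioo 0 1) {j : ι} (hj : j ∈ s)
    (hlj : lam j = μ) (hfj : fhat j ≠ 0) :
    Tendsto (dualDeriv s lam fhat β d) (𝓝[>] (-μ)) atTop := by
  have hsq : Tendsto (fun τ => (μ + τ) ^ 2) (𝓝[>] (-μ)) (𝓝[>] 0) := by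
    refine tendsto_nhdsWithin_iff.2 ⟨?_, ?_⟩
    · exact tendsto_nhdsWithin_of_tendsto_nhds
        (((continuous_const.add continuous_id).pow 2).tendsto' (-μ) 0 (by simp))
    · filter_upwards [self_mem_nhdsWithin] with τ (hτ : -μ < τ)
      exact pow_pos (show 0 < μ + τ by linarith) 2
  have hpole := hsq.inv_tendsto_nhdsGT_zero.const_mul_atTop (by positivity : 0 < 1/2 * fhat j ^ 2)
  have hrest : Tendsto (dualDeriv ∅ lam fhat β d) (𝓝[>] (-μ)) (𝓝 (dualDeriv ∅ lam fhat β d (-μ))) :=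
    (continuousAt_dualDeriv lam fhat β d hμ (by simp)).tendsto.mono_left nhdsWithin_le_nhds
  refine tendsto_atTop_mono (fun τ => ?_) (hpole.atTop_add hrest)
  calc _ = dualDeriv {j} lam fhat β d τ := by simp [dualDeriv, hlj, div_eq_mul_inv]; ring
    _ ≤ _ := dualDeriv_mono lam fhat β d (Finset.singleton_subset_iff.2 hj) τ

lemma exists_dualDeriv_eq_zero {μ : ℝ} (hs : ∀ i ∈ s, μ ≤ lam i) (hμ : -μ ∈ Ioo 0 1)
    (hβ : 0 < β) (hpos : ∀ᶠ τ in 𝓝[>] (-μ), 0 < dualDeriv s lam fhat β d τ) :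
    ∃ τ ∈ Ioo (-μ) 1, dualDeriv s lam fhat β d τ = 0 :=
  exists_mem_Ioo_eq_zero_of_tendsto_atBot hμ.2
    (fun τ hτ => (continuousAt_dualDeriv lam fhat β d ⟨hμ.1.trans hτ.1, hτ.2⟩
      fun i hi => (show 0 < lam i + τ by linarith [hs i hi, hτ.1]).ne').continuousWithinAt)
    hpos
    (tendsto_dualDeriv_nhdsLT_one lam fhat β d
      (fun i hi => (show 0 < lam i + 1 by linarith [hs i hi, hμ.2]).ne') hβ)

theorem exists_dualDeriv_eq_zero_iff [Fintype ι] {μ : ℝ} (hμ : ∀ i, μ ≤ lam i) (hμ0 : μ < 0)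
    (hμ1 : -1 < μ) (hβ : 0 < β) :
    (∃ τ ∈ Ioo (-μ) 1, dualDeriv Finset.univ lam fhat β d τ = 0) ↔
      ((∑ i ∈ Finset.univ.filter (fun i => lam i = μ), fhat i ^ 2) ≠ 0 ∨
        0 < (1/2) * (∑ i ∈ Finset.univ.filter (fun i => μ < lam i),
              fhat i ^ 2 / (lam i - μ) ^ 2)
          - (1/β) * Real.log (-μ / (1 + μ)) + d) := by
  have hμI : -μ ∈ Ioo 0 1 := ⟨by linarith, by linarith⟩
  set upper := Finset.univ.filter (fun i => μ < lam i)
  have hupper : ∀ i ∈ upper, μ < lam i := fun i hi => (Finset.mem_filter.1 hi).2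
  rw [← dualDeriv_neg]
  by_cases hlow : ∀ i, lam i = μ → fhat i = 0
  · have hC : ∑ i ∈ Finset.univ.filter (fun i => lam i = μ), fhat i ^ 2 = 0 :=
      Finset.sum_eq_zero fun i hi => by simp [hlow i (Finset.mem_filter.1 hi).2]
    have hG : dualDeriv upper lam fhat β d = dualDeriv Finset.univ lam fhat β d :=
      dualDeriv_filter lam fhat β d fun i _ hfi => (hμ i).lt_of_ne fun h => hfi (hlow i h.symm)
    simp only [← hG, hC, ne_eq, not_true_eq_false, false_or]
    constructor
    · rintro ⟨τ, hτ, h0⟩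
      rw [← h0]
      exact strictAntiOn_dualDeriv lam fhat β d hupper hμ0 hβ ⟨le_rfl, hμI.2⟩
        (Ioo_subset_Ico_self hτ) hτ.1
    · intro hL
      refine exists_dualDeriv_eq_zero lam fhat β d (fun i hi => (hupper i hi).le) hμI hβ ?_
      exact ((continuousAt_dualDeriv lam fhat β d hμI fun i hi =>
        (show 0 < lam i + -μ by linarith [hupper i hi]).ne').tendsto.mono_left
          nhdsWithin_le_nhds).eventually (lt_mem_nhds hL)
  · push Not at hlow
    obtain ⟨j, hlj, hfj⟩ := hlow
    have hC : ∑ i ∈ Finset.univ.filter (fun i => lam i = μ), fhat i ^ 2 ≠ 0 := fun h =>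
      hfj (pow_eq_zero_iff two_ne_zero |>.1
        ((Finset.sum_eq_zero_iff_of_nonneg fun i _ => sq_nonneg _).1 h j (by simp [hlj])))
    refine iff_of_true ?_ (Or.inl hC)
    exact exists_dualDeriv_eq_zero lam fhat β d (fun i _ => hμ i) hμI hβ
      ((tendsto_dualDeriv_nhdsGT_atTop lam fhat β d hμI (Finset.mem_univ j) hlj
        hfj).eventually_gt_atTop 0)

end DualDeriv

theorem minimax_existence_general
    {n : ℕ}
    (lam : Fin n → ℝ)
    (fhat : Fin n → ℝ)
    (lam1 : ℝ)
    (k : ℕ)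
    (heqk : ∀ i : Fin n, (i : ℕ) < k → lam i = lam1)
    (hltk : ∀ i : Fin n, k ≤ (i : ℕ) → lam1 < lam i)
    (β : ℝ) (hβ : 0 < β) (d : ℝ) (hlamlo : -1 < lam1) (hlamhi : lam1 < 0) :
    (∃ τ ∈ Set.Ioo (-lam1) 1, (1/2) * (∑ i, fhat i ^ 2 / (lam i + τ) ^ 2) + d - (1/β) * Real.log (τ / (1 - τ)) = 0) ↔
    ((∑ i ∈ Finset.univ.filter (fun i : Fin n => (i : ℕ) < k), fhat i ^ 2) ≠ 0 ∨
      0 < (1/2) * (∑ i ∈ Finset.univ.filter (fun i : Fin n => k ≤ (i : ℕ)),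
            fhat i ^ 2 / (lam i - lam1) ^ 2)
          - (1/β) * Real.log (-lam1 / (1 + lam1)) + d) := by
  have hmin : ∀ i, lam1 ≤ lam i := fun i =>
    (lt_or_ge (i : ℕ) k).elim (fun h => (heqk i h).ge) fun h => (hltk i h).le
  have hlow : Finset.univ.filter (fun i : Fin n => (i : ℕ) < k) =
      Finset.univ.filter (fun i => lam i = lam1) := Finset.filter_congr fun i _ =>
    ⟨heqk i, fun h => by_contra fun hik => (hltk i (not_lt.1 hik)).ne' h⟩
  have hup : Finset.univ.filter (fun i : Fin n => k ≤ (i : ℕ)) =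
      Finset.univ.filter (fun i => lam1 < lam i) := Finset.filter_congr fun i _ =>
    ⟨hltk i, fun h => not_lt.1 fun hik => h.ne' (heqk i hik)⟩
  rw [hlow, hup]
  exact exists_dualDeriv_eq_zero_iff lam fhat β d hmin hlamhi hlamlo hβ

/-- **Existence condition for the minimax dual problem** (Proposition 2 of Chen–Gao). -/
theorem minimax_existence
    {n : ℕ} (hn : 0 < n)
    (A : Matrix (Fin n) (Fin n) ℝ) (hA : A.IsSymm)
    (lam : Fin n → ℝ) (hsort : ∀ i j : Fin n, i ≤ j → lam i ≤ lam j)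
    (U : Matrix (Fin n) (Fin n) ℝ) (hUorth : U * Uᵀ = 1)
    (hAeig : A = U * Matrix.diagonal lam * Uᵀ)
    (f : Fin n → ℝ) (fhat : Fin n → ℝ) (hfhat : fhat = Uᵀ.mulVec f)
    (lam1 : ℝ) (hlam1 : lam1 = lam ⟨0, hn⟩)
    (k : ℕ) (hk0 : 0 < k) (hkn : k ≤ n)
    (heqk : ∀ i : Fin n, (i : ℕ) < k → lam i = lam1)
    (hltk : ∀ i : Fin n, k ≤ (i : ℕ) → lam1 < lam i)
    (β : ℝ) (hβ : 0 < β) (d : ℝ) (hlamlo : -1 < lam1) (hlamhi : lam1 < 0) :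
    (∃ τ ∈ Set.Ioo (-lam1) 1, (1/2) * (∑ i, fhat i ^ 2 / (lam i + τ) ^ 2) + d - (1/β) * Real.log (τ / (1 - τ)) = 0) ↔
    ((∑ i ∈ Finset.univ.filter (fun i : Fin n => (i : ℕ) < k), fhat i ^ 2) ≠ 0 ∨
      0 < (1/2) * (∑ i ∈ Finset.univ.filter (fun i : Fin n => k ≤ (i : ℕ)),
            fhat i ^ 2 / (lam i - lam1) ^ 2)
          - (1/β) * Real.log (-lam1 / (1 + lam1)) + d) :=
  minimax_existence_general lam fhat lam1 k heqk hltk β hβ d hlamlo hlamhi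
end

section
/- Unboundedness of the minimax problem: If the smallest eigenvalue λ₁ of A satisfies λ₁ < −1, then the function Π₂(x) = ½xᵀAx − fᵀx + (1/β)log(1 + exp(β(½xᵀx + d))) is unbounded below on ℝⁿ, i.e. inf_{x ∈ ℝⁿ} Π₂(x) = −∞. -/
/-!
Along an eigenvector `v` for `λ₁` the quadratic part of `Π₂(t • v)` is `½ λ₁ ‖v‖² t²`, while the
softplus term `(1/β) log (1 + exp (β y))` is at most `log 2 / β + |y|`, i.e. it grows like
`½ ‖v‖² t²`. Hence `Π₂(t • v) ≤ ½ (λ₁ + 1) ‖v‖² t² + O(t)`, which tends to `-∞` when `λ₁ < -1`.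
-/

open Matrix Filter

lemma Real.log_one_add_exp_le_log_two_add_abs (y : ℝ) :
    Real.log (1 + Real.exp y) ≤ Real.log 2 + |y| := by
  have hle : 1 + Real.exp y ≤ 2 * Real.exp |y| := by
    linarith [Real.exp_le_exp.mpr (le_abs_self y), Real.one_le_exp (abs_nonneg y)]
  calc Real.log (1 + Real.exp y) ≤ Real.log (2 * Real.exp |y|) := Real.log_le_log (by positivity) hle
    _ = Real.log 2 + |y| := by rw [Real.log_mul two_ne_zero (Real.exp_ne_zero _), Real.log_exp]

lemma Real.one_div_mul_log_one_add_exp_mul_le {β : ℝ} (hβ : 0 < β) (y : ℝ) :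
    (1 / β) * Real.log (1 + Real.exp (β * y)) ≤ Real.log 2 / β + |y| := by
  have h := Real.log_one_add_exp_le_log_two_add_abs (β * y)
  rw [abs_mul, abs_of_pos hβ] at h
  calc (1 / β) * Real.log (1 + Real.exp (β * y)) ≤ (1 / β) * (Real.log 2 + β * |y|) := by gcongr
    _ = Real.log 2 / β + |y| := by field_simp

lemma tendsto_quadratic_atTop_atBot {a : ℝ} (ha : a < 0) (b c : ℝ) :
    Tendsto (fun t : ℝ => a * t ^ 2 + b * t + c) atTop atBot := by
  have hlin : Tendsto (fun t : ℝ => a * t + b) atTop atBot :=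
    tendsto_atBot_add_const_right _ b (tendsto_id.const_mul_atTop_of_neg ha)
  refine (tendsto_atBot_add_const_right _ c (tendsto_id.atTop_mul_atBot₀ hlin)).congr fun t => ?_
  simp only [id]
  ring

lemma Matrix.smul_dotProduct_mulVec_smul_of_mulVec_eq {ι R : Type*} [Fintype ι] [CommRing R]
    {A : Matrix ι ι R} {v : ι → R} {μ : R} (hv : A *ᵥ v = μ • v) (t : R) :
    (t • v) ⬝ᵥ A *ᵥ (t • v) = μ * t ^ 2 * (v ⬝ᵥ v) := by
  rw [mulVec_smul, hv]
  simp only [smul_dotProduct, dotProduct_smul, smul_eq_mul]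
  ring

theorem minimax_unbounded_general
    {n : ℕ}
    (A : Matrix (Fin n) (Fin n) ℝ)
    (lam1 : ℝ)
    (hlam1eig : ∃ v : Fin n → ℝ, v ≠ 0 ∧ A.mulVec v = lam1 • v)
    (f : Fin n → ℝ) (β : ℝ) (hβ : 0 < β) (d : ℝ)
    (Pi2 : (Fin n → ℝ) → ℝ)
    (hPi2 : Pi2 = fun x : Fin n → ℝ => (1/2) * (x ⬝ᵥ A.mulVec x) - f ⬝ᵥ x
        + (1/β) * Real.log (1 + Real.exp (β * ((1/2) * (x ⬝ᵥ x) + d))))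
    (hlam : lam1 < -1) :
    ¬ BddBelow (Set.range Pi2) := by
  obtain ⟨v, hv0, hv⟩ := hlam1eig
  have hs : 0 < v ⬝ᵥ v := by simpa using dotProduct_star_self_pos_iff.mpr hv0
  have hbound : ∀ t : ℝ, Pi2 (t • v) ≤
      (lam1 + 1) / 2 * (v ⬝ᵥ v) * t ^ 2 + -(f ⬝ᵥ v) * t + (Real.log 2 / β + |d|) := by
    intro t
    have hsoft := Real.one_div_mul_log_one_add_exp_mul_le hβ ((1/2) * ((t • v) ⬝ᵥ (t • v)) + d)
    have hnorm : (t • v) ⬝ᵥ (t • v) = t ^ 2 * (v ⬝ᵥ v) := by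
      simp only [smul_dotProduct, dotProduct_smul, smul_eq_mul]; ring
    have habs : |(1/2) * (t ^ 2 * (v ⬝ᵥ v)) + d| ≤ (1/2) * (t ^ 2 * (v ⬝ᵥ v)) + |d| :=
      (abs_add_le _ _).trans_eq (by rw [abs_of_nonneg (by positivity)])
    rw [hnorm] at hsoft
    subst hPi2
    beta_reduce
    rw [smul_dotProduct_mulVec_smul_of_mulVec_eq hv, hnorm, dotProduct_smul, smul_eq_mul]
    linarith
  have htend : Tendsto (fun t : ℝ => Pi2 (t • v)) atTop atBot :=
    tendsto_atBot_mono hbound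
      (tendsto_quadratic_atTop_atBot (mul_neg_of_neg_of_pos (by linarith) hs) _ _)
  exact fun hbdd => not_bddBelow_of_tendsto_atBot htend
    (hbdd.mono (Set.range_comp_subset_range _ Pi2))

/-- **Unboundedness of the minimax problem**: if the smallest eigenvalue of `A`
is `< -1`, then `Π₂` is unbounded below on `ℝⁿ`. -/
theorem minimax_unbounded
    {n : ℕ} (hn : 0 < n)
    (A : Matrix (Fin n) (Fin n) ℝ) (hA : A.IsSymm)
    (lam1 : ℝ)
    (hlam1eig : ∃ v : Fin n → ℝ, v ≠ 0 ∧ A.mulVec v = lam1 • v)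
    (hlam1min : ∀ μ : ℝ, (∃ v : Fin n → ℝ, v ≠ 0 ∧ A.mulVec v = μ • v) → lam1 ≤ μ)
    (f : Fin n → ℝ) (β : ℝ) (hβ : 0 < β) (d : ℝ)
    (Pi2 : (Fin n → ℝ) → ℝ)
    (hPi2 : Pi2 = fun x : Fin n → ℝ => (1/2) * (x ⬝ᵥ A.mulVec x) - f ⬝ᵥ x
        + (1/β) * Real.log (1 + Real.exp (β * ((1/2) * (x ⬝ᵥ x) + d))))
    (hlam : lam1 < -1) :
    ¬ BddBelow (Set.range Pi2) :=
  minimax_unbounded_general A lam1 hlam1eig f β hβ d Pi2 hPi2 hlam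
end
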